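/- Let X be a CAT(0) cube complex, F a member of a factor system 𝔉 with constant ξ, and x, y ∈ X 0-cubes with d_{ĈF}(π_F(x), π_F(y)) > 2ξ + 4. Then any combinatorial geodesic from x to y enters some parallel copy of F. -/

import Mathlib

/-- A combinatorial model of a CAT(0) cube complex: its `0`--skeleton is a
median graph, encoded by its wallspace (hyperplanes and halfspaces), with
the graph metric on the `1`--skeleton equal to the wall-counting metric. -/
structure CubeComplex where
  /-- vertices (`0`--cubes) -/
  V : Type
  /-- hyperplanes (walls) -/
  Wall : Type
  /-- halfspace membership: `side w x` means `x` is on the positive side of `w` -/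
  side : Wall → V → Prop
  /-- graph metric on the `1`--skeleton -/
  d : V → V → ℕ
  sepFinite : ∀ x y : V, {w : Wall | ¬ (side w x ↔ side w y)}.Finite
  d_eq : ∀ x y : V, d x y = {w : Wall | ¬ (side w x ↔ side w y)}.ncard
  /-- every hyperplane is dual to some `1`--cube -/
  wall_dual : ∀ w : Wall, ∃ x y : V, d x y = 1 ∧ ¬ (side w x ↔ side w y)
  /-- the median operation of the underlying median graph -/
  median : V → V → V → V
  median_xy : ∀ x y z, d x (median x y z) + d (median x y z) y = d x y
  median_yz : ∀ x y z, d y (median x y z) + d (median x y z) z = d y z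
  median_xz : ∀ x y z, d x (median x y z) + d (median x y z) z = d x z

namespace CubeComplex

variable (X : CubeComplex)

/-- the hyperplane `w` separates `x` from `y` -/
def Sep (w : X.Wall) (x y : X.V) : Prop := ¬ (X.side w x ↔ X.side w y)

/-- the hyperplane `w` separates `x` from the set `K` -/
def SepFrom (w : X.Wall) (x : X.V) (K : Set X.V) : Prop := ∀ k ∈ K, X.Sep w x k

/-- `z` lies on a geodesic from `x` to `y` -/
def Btw (x z y : X.V) : Prop := X.d x z + X.d z y = X.d x y

/-- a convex (interval-closed, equivalently geodesically convex) subset -/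
def IsConvex (K : Set X.V) : Prop := ∀ a ∈ K, ∀ b ∈ K, ∀ z, X.Btw a z b → z ∈ K

/-- the hyperplane `w` crosses the set `K` -/
def Crosses (w : X.Wall) (K : Set X.V) : Prop := ∃ a ∈ K, ∃ b ∈ K, X.Sep w a b

/-- two subcomplexes are parallel if exactly the same hyperplanes cross them -/
def ParallelSet (K K' : Set X.V) : Prop := ∀ w : X.Wall, X.Crosses w K ↔ X.Crosses w K'

/-- the vertex set of the carrier `N(w)` of the hyperplane `w` -/
def carrier (w : X.Wall) : Set X.V := {x | ∃ y, X.d x y = 1 ∧ X.Sep w x y}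

end CubeComplex

/-- A convex subcomplex of a CAT(0) cube complex, together with its gate
(closest-point projection) map, characterized by the property that a
hyperplane separates `x` from `gate x` iff it separates `x` from the
subcomplex. -/
structure ConvexSub (X : CubeComplex) where
  carrier : Set X.V
  nonempty : carrier.Nonempty
  convex : X.IsConvex carrier
  gate : X.V → X.V
  gate_mem : ∀ x, gate x ∈ carrier
  gate_idem : ∀ x ∈ carrier, gate x = x
  gate_sep : ∀ x w, X.Sep w x (gate x) ↔ X.SepFrom w x carrier

namespace CubeComplex

variable (X : CubeComplex)

/-- the set `S` has diameter `< n` -/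
def DiamLt (S : Set X.V) (n : ℕ) : Prop := ∀ a ∈ S, ∀ b ∈ S, X.d a b < n

/-- `S` is (the vertex set of) a combinatorial hyperplane: one of the two
copies of a hyperplane `w` bounding its carrier -/
def IsCombHypSet (S : Set X.V) : Prop :=
  ∃ w : X.Wall,
    S = {x | x ∈ X.carrier w ∧ X.side w x} ∨ S = {x | x ∈ X.carrier w ∧ ¬ X.side w x}

/-- the carrier of the hyperplane `w` inside the subcomplex `K` -/
def carrierIn (K : Set X.V) (w : X.Wall) : Set X.V :=
  {x | x ∈ K ∧ ∃ y ∈ K, X.d x y = 1 ∧ X.Sep w x y}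

end CubeComplex

/-- A factor system on a CAT(0) cube complex `X` (Definition 8.1 of
Behrstock–Hagen–Sisto): a uniformly locally finite family of nonempty convex
subcomplexes containing `X` and all subcomplexes parallel to combinatorial
hyperplanes, and closed under gate projections of diameter at least `ξ`. -/
structure FactorSystem (X : CubeComplex) where
  /-- index set of the members of the factor system -/
  Fac : Type
  /-- the members, as convex subcomplexes -/
  F : Fac → ConvexSub X
  /-- multiplicity bound -/
  Δ : ℕ
  one_le_Δ : 1 ≤ Δ
  /-- projection threshold -/
  ξ : ℕ
  one_le_ξ : 1 ≤ ξ
  /-- `X` itself belongs to the factor system -/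
  top : Fac
  top_carrier : (F top).carrier = Set.univ
  /-- uniform local finiteness: each `0`--cube lies in at most `Δ` members -/
  loc_fin : ∀ x : X.V, {i : Fac | x ∈ (F i).carrier}.Finite ∧
    {i : Fac | x ∈ (F i).carrier}.ncard ≤ Δ
  /-- every convex subcomplex parallel to a combinatorial hyperplane belongs
  to the factor system -/
  hyp_mem : ∀ K : ConvexSub X,
    (∃ S : Set X.V, X.IsCombHypSet S ∧ X.ParallelSet K.carrier S) →
    ∃ i : Fac, (F i).carrier = K.carrier
  /-- closure under gate projections: for `F, F'` in the system, either the
  projection `𝔤_F(F')` is in the system or it has diameter `< ξ` -/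
  proj_closed : ∀ i j : Fac,
    (∃ k : Fac, (F k).carrier = (F i).gate '' (F j).carrier) ∨
    X.DiamLt ((F i).gate '' (F j).carrier) ξ

namespace FactorSystem

variable {X : CubeComplex} (FS : FactorSystem X)

/-- `i` indexes a cone point of the factored contact graph of `F j`: a member
of `𝔉_{F j} − {F j}` which is parallel to a combinatorial hyperplane or has
diameter at least `ξ` -/
def ConePt (j i : FS.Fac) : Prop :=
  (FS.F i).carrier ⊆ (FS.F j).carrier ∧ (FS.F i).carrier ≠ (FS.F j).carrier ∧
    ((∃ S : Set X.V, X.IsCombHypSet S ∧ X.ParallelSet (FS.F i).carrier S) ∨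
      ¬ X.DiamLt (FS.F i).carrier FS.ξ)

/-- the contact/cone adjacency relation underlying the factored contact graph
of `F j`.  Vertices: `Sum.inl w` for hyperplanes `w`, `Sum.inr i` for cone
points. -/
def fcgRel (j : FS.Fac) : (X.Wall ⊕ FS.Fac) → (X.Wall ⊕ FS.Fac) → Prop
  | Sum.inl w, Sum.inl w' =>
      X.Crosses w (FS.F j).carrier ∧ X.Crosses w' (FS.F j).carrier ∧
        ∃ x, x ∈ X.carrierIn (FS.F j).carrier w ∧ x ∈ X.carrierIn (FS.F j).carrier w'
  | Sum.inl w, Sum.inr i => FS.ConePt j i ∧ X.Crosses w (FS.F i).carrier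
  | Sum.inr i, Sum.inl w => FS.ConePt j i ∧ X.Crosses w (FS.F i).carrier
  | Sum.inr _, Sum.inr _ => False

/-- the factored contact graph `Ĉ(F j)` of the member `F j` of the factor
system: the contact graph of `F j` with a cone vertex for each member of
`𝔉_{F j} − {F j}` parallel to a combinatorial hyperplane or of diameter
`≥ ξ`, joined to all hyperplanes crossing it. -/
def fcg (j : FS.Fac) : SimpleGraph (X.Wall ⊕ FS.Fac) where
  Adj a b := a ≠ b ∧ FS.fcgRel j a b
  symm := by
    refine ⟨?_⟩
    rintro (w | i) (w' | i') ⟨hne, h⟩ <;>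
      refine ⟨Ne.symm hne, ?_⟩
    · obtain ⟨h1, h2, x, hx1, hx2⟩ := h
      exact ⟨h2, h1, x, hx2, hx1⟩
    · exact h
    · exact h
    · exact h
  loopless := ⟨fun a h => h.1 rfl⟩

/-- the projection `π_{F j}(x)` of a `0`--cube `x` to the factored contact
graph of `F j`: the clique of hyperplanes of `F j` whose carriers contain the
gate of `x` -/
def projFC (j : FS.Fac) (x : X.V) : Set (X.Wall ⊕ FS.Fac) :=
  {v | ∃ w : X.Wall, v = Sum.inl w ∧
    (FS.F j).gate x ∈ X.carrierIn (FS.F j).carrier w}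

/-- the projection of a subset `S ⊆ X` to the factored contact graph of `F j` -/
def projFCSet (j : FS.Fac) (S : Set X.V) : Set (X.Wall ⊕ FS.Fac) :=
  ⋃ z ∈ S, FS.projFC j z

/-- distance between subsets of the factored contact graph of `F j` -/
noncomputable def dFC (j : FS.Fac) (A B : Set (X.Wall ⊕ FS.Fac)) : ℕ :=
  sInf {n | ∃ a ∈ A, ∃ b ∈ B, (FS.fcg j).dist a b = n}

/-- `F i` is parallel into `F j` (parallel to a subcomplex of `F j`) -/
def ParallelInto (i j : FS.Fac) : Prop :=
  ∃ S : Set X.V, S ⊆ (FS.F j).carrier ∧ X.ParallelSet S (FS.F i).carrier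

/-- the parallelism classes of `F i` and `F j` are orthogonal: parallel copies
of `F i` and `F j` span an (`ℓ¹`-) isometrically embedded product `F i × F j` -/
def Orthogonal (i j : FS.Fac) : Prop :=
  ∃ ι : (FS.F i).carrier × (FS.F j).carrier → X.V,
    (∀ p q : (FS.F i).carrier × (FS.F j).carrier,
      X.d (ι p) (ι q) = X.d (p.1 : X.V) (q.1 : X.V) + X.d (p.2 : X.V) (q.2 : X.V)) ∧
    (∀ b : (FS.F j).carrier,
      X.ParallelSet (Set.range fun a => ι (a, b)) (FS.F i).carrier) ∧
    (∀ a : (FS.F i).carrier,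
      X.ParallelSet (Set.range fun b => ι (a, b)) (FS.F j).carrier)

/-- the parallelism classes of `F i` and `F j` are transverse -/
def Transverse (i j : FS.Fac) : Prop :=
  ¬ FS.ParallelInto i j ∧ ¬ FS.ParallelInto j i ∧ ¬ FS.Orthogonal i j

end FactorSystem

/-- a combinatorial geodesic, recorded by its sequence of `0`--cubes -/
def CubeComplex.IsGeodesicSeq (X : CubeComplex) {n : ℕ} (α : Fin (n + 1) → X.V) : Prop :=
  ∀ i j : Fin (n + 1), X.d (α i) (α j) = max (i : ℕ) (j : ℕ) - min (i : ℕ) (j : ℕ)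

/-!
Call a hyperplane `v` separating `z` from `F` *blocking* if some hyperplane crossing `F` misses
the combinatorial hyperplanes of `v`. If `v` blocks both `z` and `z'`, then up to hyperplane
equivalence the gates of `z` and `z'` to `F` factor through the combinatorial hyperplane `H` of
`v` on the side of `F`, a member of `𝔉`. So they lie in `𝔤_F(H)`, which either has diameter `< ξ`
or is a member of `𝔉_F` of diameter `≥ ξ` other than `F` (some hyperplane of `F` misses `H`), that
is a cone point of `ĈF`; either way `π_F(z)` and `π_F(z')` are within `ξ + 1`. Hence no vertex of
the geodesic is blocked both by a hyperplane blocking `x` and by one blocking `y`. Every hyperplane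
blocking a vertex of the geodesic blocks `x` or `y`, and consecutive vertices differ only in the
hyperplane crossed between them, so a discrete intermediate value argument gives a vertex `p`
blocked by nothing. The vertices separated from `p` only by hyperplanes crossing `F` then form a
parallel copy of `F`.
-/

namespace CubeComplex

variable {X : CubeComplex} {w v : X.Wall} {a b c x y z p q : X.V} {K L : Set X.V}

theorem Sep.symm (h : X.Sep w a b) : X.Sep w b a := fun h' => h h'.symm

theorem sep_comm : X.Sep w a b ↔ X.Sep w b a := ⟨Sep.symm, Sep.symm⟩

theorem not_sep_self (w : X.Wall) (a : X.V) : ¬ X.Sep w a a := fun h => h Iff.rfl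

theorem sep_of_not_sep_of_sep (hab : ¬ X.Sep w a b) (hbc : X.Sep w b c) : X.Sep w a c := by
  unfold Sep at *; tauto

theorem sep_of_sep_of_not_sep (hab : X.Sep w a b) (hbc : ¬ X.Sep w b c) : X.Sep w a c := by
  unfold Sep at *; tauto

theorem not_sep_of_sep_of_sep (hab : X.Sep w a b) (hbc : X.Sep w b c) : ¬ X.Sep w a c := by
  unfold Sep at *; tauto

theorem SepFrom.not_crosses (h : X.SepFrom w z K) : ¬ X.Crosses w K := by
  rintro ⟨a, ha, b, hb, hab⟩
  exact not_sep_of_sep_of_sep (h a ha).symm (h b hb) hab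

theorem SepFrom.of_not_sep (h : X.SepFrom w a K) (hab : ¬ X.Sep w a b) : X.SepFrom w b K :=
  fun k hk => sep_of_not_sep_of_sep (fun h' => hab h'.symm) (h k hk)

theorem sepFrom_of_sep_of_not_crosses {k : X.V} (hk : k ∈ K) (h : X.Sep w z k)
    (hK : ¬ X.Crosses w K) : X.SepFrom w z K :=
  fun k' hk' => sep_of_sep_of_not_sep h fun h' => hK ⟨k, hk, k', hk', h'⟩

def sepWalls (X : CubeComplex) (x y : X.V) : Set X.Wall := {w | X.Sep w x y}

theorem d_eq_ncard_sepWalls (x y : X.V) : X.d x y = (X.sepWalls x y).ncard := X.d_eq x y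

theorem finite_sepWalls (x y : X.V) : (X.sepWalls x y).Finite := X.sepFinite x y

theorem d_eq_d_of_sep_iff (h : ∀ w, X.Sep w a b ↔ X.Sep w x y) : X.d a b = X.d x y := by
  rw [d_eq_ncard_sepWalls, d_eq_ncard_sepWalls]
  exact congrArg Set.ncard (Set.ext h)

theorem d_comm (a b : X.V) : X.d a b = X.d b a := d_eq_d_of_sep_iff fun _ => sep_comm

theorem d_eq_zero_iff : X.d a b = 0 ↔ ∀ w, ¬ X.Sep w a b := by
  rw [d_eq_ncard_sepWalls, Set.ncard_eq_zero (finite_sepWalls a b), Set.eq_empty_iff_forall_notMem]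
  rfl

theorem d_eq_one_iff : X.d a b = 1 ↔ ∃ u, ∀ w, X.Sep w a b ↔ w = u := by
  rw [d_eq_ncard_sepWalls, Set.ncard_eq_one]
  simp only [Set.ext_iff, Set.mem_singleton_iff]
  rfl

theorem d_self (a : X.V) : X.d a a = 0 := d_eq_zero_iff.2 fun w => not_sep_self w a

theorem d_pos_of_sep (h : X.Sep w a b) : 0 < X.d a b :=
  Nat.pos_of_ne_zero fun h0 => d_eq_zero_iff.1 h0 w h

theorem eq_of_sep_of_d_eq_one (hab : X.d a b = 1) (hv : X.Sep v a b) (hw : X.Sep w a b) :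
    w = v := by
  obtain ⟨u, hu⟩ := d_eq_one_iff.1 hab
  exact ((hu w).1 hw).trans ((hu v).1 hv).symm

theorem sep_iff_sep_of_d_eq_zero (h : X.d a x = 0) : X.Sep w a b ↔ X.Sep w x b := by
  have := d_eq_zero_iff.1 h w
  unfold Sep at *; tauto

theorem d_eq_d_of_d_eq_zero (ha : X.d a x = 0) (hb : X.d b y = 0) : X.d a b = X.d x y :=
  d_eq_d_of_sep_iff fun w => (sep_iff_sep_of_d_eq_zero ha).trans <| by
    rw [sep_comm, sep_iff_sep_of_d_eq_zero hb, sep_comm]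

theorem btw_iff : X.Btw x z y ↔ ∀ w, X.Sep w x z → ¬ X.Sep w z y := by
  have hfin := finite_sepWalls (X := X)
  have hsub : X.sepWalls x y ⊆ X.sepWalls x z ∪ X.sepWalls z y := fun w hw => by
    by_contra h
    simp only [Set.mem_union, not_or] at h
    exact h.2 (sep_of_not_sep_of_sep (fun h' => h.1 h'.symm) hw)
  unfold Btw
  rw [d_eq_ncard_sepWalls, d_eq_ncard_sepWalls, d_eq_ncard_sepWalls]
  constructor
  · intro h w hxz hzy
    have hle := Set.ncard_le_ncard hsub ((hfin x z).union (hfin z y))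
    have hunion := Set.ncard_union_add_ncard_inter _ _ (hfin x z) (hfin z y)
    have hinter : (X.sepWalls x z ∩ X.sepWalls z y).ncard = 0 := by omega
    rw [Set.ncard_eq_zero ((hfin x z).inter_of_left _)] at hinter
    exact hinter.subset ⟨hxz, hzy⟩
  · intro h
    have heq : X.sepWalls x y = X.sepWalls x z ∪ X.sepWalls z y :=
      hsub.antisymm <| Set.union_subset (fun w hw => sep_of_sep_of_not_sep hw (h w hw))
        fun w hw => sep_of_not_sep_of_sep (fun h' => h w h' hw) hw
    rw [heq]
    exact (Set.ncard_union_eq (Set.disjoint_left.2 h) (hfin x z) (hfin z y)).symm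

theorem Btw.sep_of_sep_left (h : X.Btw x z y) (hw : X.Sep w x z) : X.Sep w x y :=
  sep_of_sep_of_not_sep hw (btw_iff.1 h w hw)

theorem Btw.sep_of_sep_right (h : X.Btw x z y) (hw : X.Sep w z y) : X.Sep w x y :=
  sep_of_not_sep_of_sep (fun h' => btw_iff.1 h w h' hw) hw

theorem Btw.trans (h₁ : X.Btw p a z) (h₂ : X.Btw p z q) : X.Btw p a q :=
  btw_iff.2 fun w hpa haq => btw_iff.1 h₂ w (h₁.sep_of_sep_left hpa)
    (sep_of_not_sep_of_sep (fun h' => btw_iff.1 h₁ w hpa h'.symm) haq)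

theorem btw_self_left (x y : X.V) : X.Btw x x y := by
  unfold Btw; rw [d_self, zero_add]

theorem btw_self_right (x y : X.V) : X.Btw x y y := by
  unfold Btw; rw [d_self, add_zero]

theorem btw_median_xy (x y z : X.V) : X.Btw x (X.median x y z) y := X.median_xy x y z

theorem btw_median_yz (x y z : X.V) : X.Btw y (X.median x y z) z := X.median_yz x y z

theorem btw_median_xz (x y z : X.V) : X.Btw x (X.median x y z) z := X.median_xz x y z

theorem IsConvex.inter (hK : X.IsConvex K) (hL : X.IsConvex L) : X.IsConvex (K ∩ L) :=
  fun a ha b hb z hz => ⟨hK a ha.1 b hb.1 z hz, hL a ha.2 b hb.2 z hz⟩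

theorem IsConvex.mem_of_d_eq_zero (hK : X.IsConvex K) (ha : a ∈ K) (h : X.d a b = 0) : b ∈ K :=
  hK a ha a ha b <| by unfold Btw; rw [d_comm b a, h, d_self]

theorem isConvex_setOf_btw (p q : X.V) : X.IsConvex {z | X.Btw p z q} := by
  intro a ha b hb z hz
  simp only [Set.mem_ofPred_eq, btw_iff] at *
  intro w hpz hzq
  have := ha w; have := hb w; have := hz w
  unfold Sep at *; tauto

theorem isConvex_setOf_forall_sep_imp (P : X.Wall → Prop) (p : X.V) :
    X.IsConvex {u | ∀ w, X.Sep w u p → P w} := by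
  intro a ha b hb z hz w hzp
  by_cases hap : X.Sep w a p
  · exact ha w hap
  · have haz : X.Sep w a z := sep_of_not_sep_of_sep hap hzp.symm
    exact hb w (sep_of_not_sep_of_sep (fun h' => btw_iff.1 hz w haz h'.symm) hzp)

theorem IsConvex.sepFrom_of_sep_of_forall_d_le (hK : X.IsConvex K) (hp : p ∈ K)
    (hmin : ∀ k ∈ K, X.d z p ≤ X.d z k) (h : X.Sep w z p) : X.SepFrom w z K := by
  intro k hk
  set m := X.median z p k
  have hzmp : X.Btw z m p := btw_median_xy z p k
  have hmp : X.d m p = 0 := by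
    have := hmin m (hK p hp k hk m (btw_median_yz z p k))
    unfold Btw at hzmp; omega
  exact (btw_median_xz z p k).sep_of_sep_left
    (sep_of_sep_of_not_sep h fun h' => d_eq_zero_iff.1 hmp w h'.symm)

end CubeComplex

namespace ConvexSub

open CubeComplex

variable {X : CubeComplex} (G : ConvexSub X) {w : X.Wall} {a b p q : X.V}

theorem not_sep_gate (h : X.Crosses w G.carrier) (a : X.V) : ¬ X.Sep w a (G.gate a) :=
  fun hs => ((G.gate_sep a w).1 hs).not_crosses h

theorem sep_gate_gate_iff :
    X.Sep w (G.gate a) (G.gate b) ↔ X.Sep w a b ∧ X.Crosses w G.carrier := by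
  constructor
  · intro h
    have hcr : X.Crosses w G.carrier := ⟨_, G.gate_mem a, _, G.gate_mem b, h⟩
    have := G.not_sep_gate hcr a
    have := G.not_sep_gate hcr b
    exact ⟨by unfold CubeComplex.Sep at *; tauto, hcr⟩
  · rintro ⟨hab, hcr⟩
    have := G.not_sep_gate hcr a
    have := G.not_sep_gate hcr b
    unfold CubeComplex.Sep at *; tauto

theorem crosses_of_crosses_image_gate {S : Set X.V} (h : X.Crosses w (G.gate '' S)) :
    X.Crosses w S := by
  obtain ⟨_, ⟨a, ha, rfl⟩, _, ⟨b, hb, rfl⟩, hab⟩ := h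
  exact ⟨a, ha, b, hb, (G.sep_gate_gate_iff.1 hab).1⟩

open Classical in
noncomputable def ofConvex (K : Set X.V) (hne : K.Nonempty) (hK : X.IsConvex K) :
    ConvexSub X where
  carrier := K
  nonempty := hne
  convex := hK
  gate z := if z ∈ K then z else Function.argminOn (X.d z) K hne
  gate_mem z := by
    split_ifs with hz
    exacts [hz, Function.argminOn_mem _ _ _]
  gate_idem z hz := if_pos hz
  gate_sep z w := by
    split_ifs with hz
    · exact ⟨fun h => (not_sep_self w z h).elim, fun h => h z hz⟩
    · exact ⟨hK.sepFrom_of_sep_of_forall_d_le (Function.argminOn_mem _ _ _)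
        (fun k hk => Function.argminOn_le _ _ hk), fun h => h _ (Function.argminOn_mem _ _ _)⟩

/-- Gating an edge dual to a hyperplane separating `p` from the point `z` of `G ∩ [p, q]` nearest
to `p` (among those with `d p z ≠ 0`) into `G ∩ [p, z]` gives a neighbour of `p`. -/
theorem exists_btw_d_eq_one (hp : p ∈ G.carrier) (hq : q ∈ G.carrier) (hpq : 0 < X.d p q) :
    ∃ z ∈ G.carrier, X.Btw p z q ∧ X.d p z = 1 := by
  set S := {z | z ∈ G.carrier ∧ X.Btw p z q ∧ 0 < X.d p z}
  have hS : S.Nonempty := ⟨q, hq, btw_self_right p q, hpq⟩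
  obtain ⟨hzG, hpzq, hz0⟩ : Function.argminOn (X.d p) S hS ∈ S := Function.argminOn_mem _ _ _
  set z := Function.argminOn (X.d p) S hS
  obtain ⟨u, hu⟩ : ∃ u, X.Sep u p z := by
    by_contra! h
    exact hz0.ne' (d_eq_zero_iff.2 h)
  obtain ⟨a, b, hab, hu_ab, hap⟩ : ∃ a b, X.d a b = 1 ∧ X.Sep u a b ∧ ¬ X.Sep u a p := by
    obtain ⟨a, b, hab, hu_ab⟩ : ∃ a b, X.d a b = 1 ∧ X.Sep u a b := X.wall_dual u
    by_cases hap : X.Sep u a p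
    · exact ⟨b, a, by rw [d_comm]; exact hab, hu_ab.symm, not_sep_of_sep_of_sep hu_ab.symm hap⟩
    · exact ⟨a, b, hab, hu_ab, hap⟩
  set G' := ofConvex (G.carrier ∩ {y | X.Btw p y z}) ⟨p, hp, btw_self_left p z⟩
    (G.convex.inter (isConvex_setOf_btw p z))
  have hcr : X.Crosses u G'.carrier :=
    ⟨p, ⟨hp, btw_self_left p z⟩, z, ⟨hzG, btw_self_right p z⟩, hu⟩
  obtain ⟨haG, hpaz⟩ : G'.gate a ∈ G.carrier ∧ X.Btw p (G'.gate a) z := G'.gate_mem a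
  obtain ⟨hbG, hpbz⟩ : G'.gate b ∈ G.carrier ∧ X.Btw p (G'.gate b) z := G'.gate_mem b
  have hpa : X.d p (G'.gate a) = 0 := by
    by_contra h
    have hle : X.d p z ≤ X.d p (G'.gate a) :=
      Function.argminOn_le (X.d p) S ⟨haG, hpaz.trans hpzq, Nat.pos_of_ne_zero h⟩
    have hpa : ¬ X.Sep u p (G'.gate a) := fun h' =>
      G'.not_sep_gate hcr a (sep_of_not_sep_of_sep hap h')
    have := d_pos_of_sep (sep_of_not_sep_of_sep (fun h' => hpa h'.symm) hu)
    unfold CubeComplex.Btw at hpaz; omega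
  refine ⟨G'.gate b, hbG, hpbz.trans hpzq, ?_⟩
  rw [d_eq_d_of_d_eq_zero hpa (d_self _), d_eq_one_iff]
  refine ⟨u, fun w => ⟨fun h => eq_of_sep_of_d_eq_one hab hu_ab (G'.sep_gate_gate_iff.1 h).1,
    ?_⟩⟩
  rintro rfl
  exact G'.sep_gate_gate_iff.2 ⟨hu_ab, hcr⟩

end ConvexSub

namespace CubeComplex

variable {X : CubeComplex} {w v : X.Wall}

def halfspace (X : CubeComplex) (v : X.Wall) (β : Prop) : Set X.V := {x | X.side v x ↔ β}

def combHyp (X : CubeComplex) (v : X.Wall) (β : Prop) : Set X.V :=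
  {x | x ∈ X.carrier v ∧ (X.side v x ↔ β)}

theorem halfspace_nonempty (v : X.Wall) (β : Prop) : (X.halfspace v β).Nonempty := by
  obtain ⟨a, b, -, hab⟩ := X.wall_dual v
  by_cases ha : X.side v a ↔ β
  · exact ⟨a, ha⟩
  · exact ⟨b, show X.side v b ↔ β by tauto⟩

theorem isConvex_halfspace (v : X.Wall) (β : Prop) : X.IsConvex (X.halfspace v β) := by
  intro a ha b hb z hz
  by_contra h
  exact btw_iff.1 hz v (fun h' => h (h'.symm.trans ha)) fun h' => h (h'.trans hb)

theorem eq_of_forall_sep_imp_sep (h : ∀ a b, X.Sep w a b → X.Sep v a b) : w = v := by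
  obtain ⟨a, b, hab, hw⟩ := X.wall_dual w
  exact eq_of_sep_of_d_eq_one hab (h a b hw) hw

theorem combHyp_nonempty (v : X.Wall) (β : Prop) : (X.combHyp v β).Nonempty := by
  obtain ⟨a, b, hab, hv⟩ := X.wall_dual v
  by_cases ha : X.side v a ↔ β
  · exact ⟨a, ⟨b, hab, hv⟩, ha⟩
  · exact ⟨b, ⟨a, by rw [d_comm]; exact hab, Sep.symm hv⟩, by tauto⟩

theorem isConvex_combHyp (v : X.Wall) (β : Prop) : X.IsConvex (X.combHyp v β) := by
  rintro a ⟨⟨a', haa', hva⟩, ha⟩ c ⟨⟨c', hcc', hvc⟩, hc⟩ z hz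
  have hzβ : X.side v z ↔ β := isConvex_halfspace v β a ha c hc z hz
  set z' := X.median a' c' z
  have hz'β : X.side v z' ↔ ¬ β :=
    isConvex_halfspace v (¬ β) a' (by unfold Sep at hva; show _ ↔ _; tauto) c'
      (by unfold Sep at hvc; show _ ↔ _; tauto) z' (btw_median_xy a' c' z)
  have hzz' : ∀ w, X.Sep w z z' ↔ w = v := by
    refine fun w => ⟨fun hw => ?_, fun hwv => by subst hwv; unfold Sep; tauto⟩
    by_contra hwv
    have haz : X.Sep w a z :=
      sep_of_not_sep_of_sep (fun h => hwv (eq_of_sep_of_d_eq_one haa' hva h))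
        ((btw_median_xz a' c' z).sep_of_sep_right hw.symm)
    have hcz : X.Sep w c z :=
      sep_of_not_sep_of_sep (fun h => hwv (eq_of_sep_of_d_eq_one hcc' hvc h))
        ((btw_median_yz a' c' z).sep_of_sep_right hw.symm)
    exact btw_iff.1 hz w haz hcz.symm
  exact ⟨⟨z', d_eq_one_iff.2 ⟨v, hzz'⟩, (hzz' v).2 rfl⟩, hzβ⟩

theorem isCombHypSet_combHyp (v : X.Wall) (β : Prop) : X.IsCombHypSet (X.combHyp v β) := by
  refine ⟨v, ?_⟩
  by_cases hβ : β
  · exact Or.inl (Set.ext fun x => by simp only [combHyp, Set.mem_ofPred_eq, hβ, iff_true])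
  · exact Or.inr (Set.ext fun x => by simp only [combHyp, Set.mem_ofPred_eq, hβ, iff_false])

theorem crosses_combHyp_of_ne (hwv : w ≠ v) {β : Prop} (h : X.Crosses w (X.combHyp v β))
    (β' : Prop) : X.Crosses w (X.combHyp v β') := by
  by_cases hββ' : β ↔ β'
  · exact propext hββ' ▸ h
  obtain ⟨s₁, ⟨⟨y₁, hd₁, hv₁⟩, hs₁⟩, s₂, ⟨⟨y₂, hd₂, hv₂⟩, hs₂⟩, hw⟩ := h
  have hpartner : ∀ {s y}, X.d s y = 1 → X.Sep v s y → (X.side v s ↔ β) →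
      y ∈ X.combHyp v β' := fun hd hv hs =>
    ⟨⟨_, by rw [d_comm]; exact hd, hv.symm⟩, by unfold Sep at hv; tauto⟩
  refine ⟨y₁, hpartner hd₁ hv₁ hs₁, y₂, hpartner hd₂ hv₂ hs₂, ?_⟩
  have h₁ : ¬ X.Sep w s₁ y₁ := fun h => hwv (eq_of_sep_of_d_eq_one hd₁ hv₁ h)
  have h₂ : ¬ X.Sep w s₂ y₂ := fun h => hwv (eq_of_sep_of_d_eq_one hd₂ hv₂ h)
  unfold Sep at *; tauto

end CubeComplex

namespace ConvexSub

open CubeComplex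

variable {X : CubeComplex}

noncomputable def halfspace (v : X.Wall) (β : Prop) : ConvexSub X :=
  ofConvex _ (halfspace_nonempty v β) (isConvex_halfspace v β)

noncomputable def combHyp (v : X.Wall) (β : Prop) : ConvexSub X :=
  ofConvex _ (combHyp_nonempty v β) (isConvex_combHyp v β)

end ConvexSub

namespace CubeComplex

variable {X : CubeComplex} {w v : X.Wall} {k x z r : X.V} {K L : Set X.V}

/-- The point `q` is the partner across `v` of the gate of `k` onto the far halfspace of `v`. -/
theorem exists_mem_combHyp_forall_sep {β : Prop} (hk : X.side v k ↔ β) :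
    ∃ q ∈ X.combHyp v β, ∀ w, X.Sep w k q → X.SepFrom w k (X.halfspace v (¬ β)) := by
  set H := ConvexSub.halfspace v (¬ β)
  set H' := ConvexSub.halfspace v β
  set p := H.gate k
  set q := H'.gate p
  have hp : X.side v p ↔ ¬ β := H.gate_mem k
  have hq : X.side v q ↔ β := H'.gate_mem p
  have hpq : ∀ w, X.Sep w p q ↔ w = v := by
    refine fun w => ⟨fun hw => ?_, fun hwv => by subst hwv; unfold Sep; tauto⟩
    have hpH' : X.SepFrom w p (X.halfspace v β) := (H'.gate_sep p w).1 hw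
    have hkH : X.SepFrom w k (X.halfspace v (¬ β)) := (H.gate_sep k w).1 (hpH' k hk).symm
    refine eq_of_forall_sep_imp_sep fun c c' hcc' => ?_
    by_contra hv
    by_cases hc : X.side v c ↔ β
    · exact not_sep_of_sep_of_sep (hpH' c hc).symm
        (hpH' c' (by unfold Sep at hv; show _ ↔ _; tauto)) hcc'
    · exact not_sep_of_sep_of_sep (hkH c (by show _ ↔ _; tauto)).symm
        (hkH c' (by unfold Sep at hv; show _ ↔ _; tauto)) hcc'
  refine ⟨q, ⟨⟨p, d_eq_one_iff.2 ⟨v, fun w => sep_comm.trans (hpq w)⟩, ((hpq v).2 rfl).symm⟩,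
    hq⟩, fun w hkq => ?_⟩
  by_cases hkp : X.Sep w k p
  · exact (H.gate_sep k w).1 hkp
  · obtain rfl := (hpq w).1 (sep_of_not_sep_of_sep (fun h => hkp h.symm) hkq)
    exact absurd hkq (by unfold Sep; tauto)

theorem not_crosses_of_sepFrom_combHyp {β : Prop} (hK : ∀ k ∈ K, X.side v k ↔ β)
    (hz : ¬ (X.side v z ↔ β)) (hw : X.SepFrom w z (X.combHyp v β)) : ¬ X.Crosses w K := by
  rintro ⟨k₁, hk₁, k₂, hk₂, h₁₂⟩
  obtain ⟨k, hk, hkz⟩ : ∃ k ∈ K, ¬ X.Sep w k z := by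
    by_cases h : X.Sep w k₁ z
    · exact ⟨k₂, hk₂, not_sep_of_sep_of_sep h₁₂.symm h⟩
    · exact ⟨k₁, hk₁, h⟩
  obtain ⟨q, hq, hkq⟩ := exists_mem_combHyp_forall_sep (hK k hk)
  exact hkz (hkq w (sep_of_not_sep_of_sep hkz (hw q hq)) z (by show _ ↔ _; tauto))

theorem crosses_of_mem_carrierIn (h : r ∈ X.carrierIn K w) : X.Crosses w K :=
  let ⟨hr, y, hy, _, hsep⟩ := h
  ⟨r, hr, y, hy, hsep⟩

theorem carrierIn_mono (hKL : K ⊆ L) : X.carrierIn K w ⊆ X.carrierIn L w :=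
  fun _ ⟨hr, y, hy, hd, hsep⟩ => ⟨hKL hr, y, hKL hy, hd, hsep⟩

theorem IsConvex.mem_carrierIn_of_d_eq_zero (hK : X.IsConvex K) (h : r ∈ X.carrierIn K w)
    (hd : X.d r x = 0) : x ∈ X.carrierIn K w := by
  obtain ⟨hr, y, hy, hry, hsep⟩ := h
  exact ⟨hK.mem_of_d_eq_zero hr hd, y, hy, by rw [← hry, d_eq_d_of_d_eq_zero hd (d_self y)],
    (sep_iff_sep_of_d_eq_zero hd).1 hsep⟩

theorem exists_crosses_of_not_diamLt {n : ℕ} (h : ¬ X.DiamLt K n) (hn : 1 ≤ n) :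
    ∃ w, X.Crosses w K := by
  simp only [DiamLt, not_forall, not_lt] at h
  obtain ⟨a, ha, b, hb, hab⟩ := h
  obtain ⟨w, hw⟩ : ∃ w, X.Sep w a b := by
    by_contra! h'
    have := d_eq_zero_iff.2 h'
    omega
  exact ⟨w, a, ha, b, hb, hw⟩

end CubeComplex

namespace ConvexSub

open CubeComplex

variable {X : CubeComplex} (G : ConvexSub X) {r : X.V}

theorem exists_mem_carrierIn (hr : r ∈ G.carrier) (hG : ∃ w, X.Crosses w G.carrier) :
    ∃ u, r ∈ X.carrierIn G.carrier u := by
  obtain ⟨w, k₁, hk₁, k₂, hk₂, h₁₂⟩ := hG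
  obtain ⟨k, hk, hrk⟩ : ∃ k ∈ G.carrier, X.Sep w r k := by
    by_cases h : X.Sep w r k₁
    · exact ⟨k₁, hk₁, h⟩
    · exact ⟨k₂, hk₂, sep_of_not_sep_of_sep h h₁₂⟩
  obtain ⟨z, hz, -, hrz⟩ := G.exists_btw_d_eq_one hr hk (d_pos_of_sep hrk)
  obtain ⟨u, hu⟩ := d_eq_one_iff.1 hrz
  exact ⟨u, hr, z, hz, hrz, (hu u).2 rfl⟩

theorem d_gate_gate_combHyp_eq_zero {H : ConvexSub X} {v : X.Wall} {β : Prop} {t : X.V}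
    (hH : H.carrier = X.combHyp v β) (hG : ∀ k ∈ G.carrier, X.side v k ↔ β)
    (ht : ¬ (X.side v t ↔ β)) : X.d (G.gate (H.gate t)) (G.gate t) = 0 := by
  refine d_eq_zero_iff.2 fun w hw => ?_
  obtain ⟨hsep, hcr⟩ := G.sep_gate_gate_iff.1 hw
  have hsepH : X.SepFrom w t H.carrier := (H.gate_sep t w).1 hsep.symm
  rw [hH] at hsepH
  exact not_crosses_of_sepFrom_combHyp hG ht hsepH hcr

end ConvexSub

namespace CubeComplex

variable {X : CubeComplex} {v : X.Wall} {a b k x y z p : X.V} {K : Set X.V}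

def AllCrossCombHyps (X : CubeComplex) (K : Set X.V) (v : X.Wall) : Prop :=
  ∀ c, X.Crosses c K → ∀ β, X.Crosses c (X.combHyp v β)

def blockingWalls (X : CubeComplex) (K : Set X.V) (z : X.V) : Set X.Wall :=
  {v | X.SepFrom v z K ∧ ¬ X.AllCrossCombHyps K v}

def parallelCopy (X : CubeComplex) (K : Set X.V) (p : X.V) : Set X.V :=
  {u | ∀ w, X.Sep w u p → X.Crosses w K}

theorem blockingWalls_subset_union (h : X.Btw x z y) :
    X.blockingWalls K z ⊆ X.blockingWalls K x ∪ X.blockingWalls K y := by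
  rintro v ⟨hz, hv⟩
  by_cases hxz : X.Sep v x z
  · exact Or.inr ⟨hz.of_not_sep (btw_iff.1 h v hxz), hv⟩
  · exact Or.inl ⟨hz.of_not_sep fun h' => hxz h'.symm, hv⟩

theorem exists_blockingWalls_diff_subset (h : X.d a b = 1) : ∃ u,
    X.blockingWalls K a \ {u} ⊆ X.blockingWalls K b ∧
      X.blockingWalls K b \ {u} ⊆ X.blockingWalls K a := by
  obtain ⟨u, hu⟩ := d_eq_one_iff.1 h
  exact ⟨u, fun v ⟨⟨ha, hv⟩, hvu⟩ => ⟨ha.of_not_sep fun h' => hvu ((hu v).1 h'), hv⟩,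
    fun v ⟨⟨hb, hv⟩, hvu⟩ => ⟨hb.of_not_sep fun h' => hvu ((hu v).1 h'.symm), hv⟩⟩

theorem side_iff_of_not_crosses {k₀ : X.V} (h : ¬ X.Crosses v K) (hk : k ∈ K) (hk₀ : k₀ ∈ K) :
    X.side v k ↔ X.side v k₀ :=
  not_not.1 fun h' => h ⟨k, hk, k₀, hk₀, h'⟩

theorem exists_crosses_not_crosses_combHyp (hz : v ∈ X.blockingWalls K z) (β : Prop) :
    ∃ c, X.Crosses c K ∧ ¬ X.Crosses c (X.combHyp v β) := by
  obtain ⟨c, hcK, β', hβ'⟩ : ∃ c, X.Crosses c K ∧ ∃ β', ¬ X.Crosses c (X.combHyp v β') := by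
    simpa [AllCrossCombHyps] using hz.2
  have hcv : c ≠ v := by
    rintro rfl
    exact hz.1.not_crosses hcK
  exact ⟨c, hcK, fun h => hβ' (crosses_combHyp_of_ne hcv h β')⟩

theorem self_mem_parallelCopy : p ∈ X.parallelCopy K p :=
  fun w h => (not_sep_self w p h).elim

theorem isConvex_parallelCopy : X.IsConvex (X.parallelCopy K p) :=
  isConvex_setOf_forall_sep_imp _ p

theorem parallelSet_parallelCopy (hp : X.blockingWalls K p = ∅) :
    X.ParallelSet (X.parallelCopy K p) K := by
  have hpar : ∀ w, X.SepFrom w p K → X.AllCrossCombHyps K w := fun w hw => by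
    by_contra h
    exact hp.subset ⟨hw, h⟩
  refine fun c => ⟨fun ⟨u₁, hu₁, u₂, hu₂, hc⟩ => ?_, fun hc => ?_⟩
  · by_cases h₁ : X.Sep c u₁ p
    · exact hu₁ c h₁
    · exact hu₂ c (sep_of_sep_of_not_sep hc.symm h₁)
  obtain ⟨k, hk, hkp⟩ : ∃ k ∈ K, X.Sep c k p := by
    obtain ⟨k₁, hk₁, k₂, hk₂, h₁₂⟩ := hc
    by_cases h : X.Sep c k₁ p
    · exact ⟨k₁, hk₁, h⟩
    · exact ⟨k₂, hk₂, sep_of_sep_of_not_sep h₁₂.symm h⟩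
  -- the gate of `p` to the far side of `c` lies in the copy
  set H := ConvexSub.halfspace c (¬ X.side c p)
  have hH : ∀ {z}, z ∈ H.carrier ↔ X.Sep c z p := by
    intro z; show (_ ↔ _) ↔ _; unfold Sep; tauto
  refine ⟨p, self_mem_parallelCopy, H.gate p, fun w hw => ?_,
    (H.gate_sep p c).2 fun z hz => (hH.1 hz).symm⟩
  by_contra hwK
  have hpH : X.SepFrom w p H.carrier := (H.gate_sep p w).1 hw.symm
  set G := ConvexSub.combHyp w (X.side w p)
  have hkG : ¬ X.Sep c k (G.gate k) :=
    G.not_sep_gate (hpar w (sepFrom_of_sep_of_not_crosses hk (hpH k (hH.2 hkp)) hwK) c hc _) k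
  have hGk : X.side w (G.gate k) ↔ X.side w p := (G.gate_mem k).2
  exact hpH _ (hH.2 (sep_of_not_sep_of_sep (fun h => hkG h.symm) hkp)) hGk.symm

end CubeComplex

namespace FactorSystem

open CubeComplex

variable {X : CubeComplex} (FS : FactorSystem X) {i k : FS.Fac} {v w w' : X.Wall}
  {r r' r'' z z' : X.V}

def CliqueDistLE (i : FS.Fac) (r r' : X.V) (m : ℕ) : Prop :=
  ∃ w w', r ∈ X.carrierIn (FS.F i).carrier w ∧ r' ∈ X.carrierIn (FS.F i).carrier w' ∧
    ∃ P : (FS.fcg i).Walk (.inl w) (.inl w'), P.length ≤ m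

variable {FS}

theorem fcg_adj_of_mem_carrierIn (hne : w ≠ w') (hw : r ∈ X.carrierIn (FS.F i).carrier w)
    (hw' : r ∈ X.carrierIn (FS.F i).carrier w') : (FS.fcg i).Adj (.inl w) (.inl w') :=
  ⟨fun h => hne (Sum.inl_injective h), crosses_of_mem_carrierIn hw,
    crosses_of_mem_carrierIn hw', r, hw, hw'⟩

theorem fcg_adj_of_conePt (hk : FS.ConePt i k) (hw : X.Crosses w (FS.F k).carrier) :
    (FS.fcg i).Adj (.inl w) (.inr k) :=
  ⟨Sum.inl_ne_inr, hk, hw⟩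

theorem exists_walk_length_le_one (hw : r ∈ X.carrierIn (FS.F i).carrier w)
    (hw' : r ∈ X.carrierIn (FS.F i).carrier w') :
    ∃ P : (FS.fcg i).Walk (.inl w) (.inl w'), P.length ≤ 1 := by
  by_cases h : w = w'
  · subst h
    exact ⟨.nil, zero_le_one⟩
  · exact ⟨.cons (fcg_adj_of_mem_carrierIn h hw hw') .nil, le_rfl⟩

theorem CliqueDistLE.mono {m m' : ℕ} (h : FS.CliqueDistLE i r r' m) (hm : m ≤ m') :
    FS.CliqueDistLE i r r' m' :=
  let ⟨w, w', hw, hw', P, hP⟩ := h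
  ⟨w, w', hw, hw', P, hP.trans hm⟩

theorem CliqueDistLE.trans {m m' : ℕ} (h : FS.CliqueDistLE i r r' m)
    (h' : FS.CliqueDistLE i r' r'' m') : FS.CliqueDistLE i r r'' (m + 1 + m') := by
  obtain ⟨w₁, w₂, h₁, h₂, P, hP⟩ := h
  obtain ⟨w₃, w₄, h₃, h₄, Q, hQ⟩ := h'
  obtain ⟨M, hM⟩ := exists_walk_length_le_one h₂ h₃
  refine ⟨w₁, w₄, h₁, h₄, P.append (M.append Q), ?_⟩
  simp only [SimpleGraph.Walk.length_append]
  omega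

theorem exists_walk_length_le_d_add_one (hw : r ∈ X.carrierIn (FS.F i).carrier w)
    (hw' : r' ∈ X.carrierIn (FS.F i).carrier w') :
    ∃ P : (FS.fcg i).Walk (.inl w) (.inl w'), P.length ≤ X.d r r' + 1 := by
  induction hd : X.d r r' generalizing r w with
  | zero =>
    have hw'' := (FS.F i).convex.mem_carrierIn_of_d_eq_zero hw' (by rw [d_comm, hd])
    exact exists_walk_length_le_one hw hw''
  | succ m ih =>
    obtain ⟨z, hz, hrzr', hrz⟩ := (FS.F i).exists_btw_d_eq_one hw.1 hw'.1 (by omega)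
    obtain ⟨u, hu⟩ := d_eq_one_iff.1 hrz
    have hsep : X.Sep u r z := (hu u).2 rfl
    obtain ⟨M, hM⟩ := exists_walk_length_le_one hw ⟨hw.1, z, hz, hrz, hsep⟩
    obtain ⟨P, hP⟩ := ih ⟨hz, r, hw.1, by rw [d_comm]; exact hrz, hsep.symm⟩
      (by unfold CubeComplex.Btw at hrzr'; omega)
    refine ⟨M.append P, ?_⟩
    rw [SimpleGraph.Walk.length_append]
    omega

theorem cliqueDistLE_of_mem (hr : r ∈ (FS.F i).carrier) (hr' : r' ∈ (FS.F i).carrier)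
    (hF : ∃ c, X.Crosses c (FS.F i).carrier) : FS.CliqueDistLE i r r' (X.d r r' + 1) := by
  obtain ⟨w, hw⟩ := (FS.F i).exists_mem_carrierIn hr hF
  obtain ⟨w', hw'⟩ := (FS.F i).exists_mem_carrierIn hr' hF
  exact ⟨w, w', hw, hw', exists_walk_length_le_d_add_one hw hw'⟩

theorem cliqueDistLE_of_conePt (hk : FS.ConePt i k) (hr : r ∈ (FS.F k).carrier)
    (hr' : r' ∈ (FS.F k).carrier) (hFk : ∃ c, X.Crosses c (FS.F k).carrier) :
    FS.CliqueDistLE i r r' 2 := by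
  obtain ⟨w, hw⟩ := (FS.F k).exists_mem_carrierIn hr hFk
  obtain ⟨w', hw'⟩ := (FS.F k).exists_mem_carrierIn hr' hFk
  exact ⟨w, w', carrierIn_mono hk.1 hw, carrierIn_mono hk.1 hw',
    .cons (fcg_adj_of_conePt hk (crosses_of_mem_carrierIn hw))
      (.cons (fcg_adj_of_conePt hk (crosses_of_mem_carrierIn hw')).symm .nil), le_rfl⟩

theorem dFC_le_of_cliqueDistLE {m : ℕ}
    (h : FS.CliqueDistLE i ((FS.F i).gate z) ((FS.F i).gate z') m) :
    FS.dFC i (FS.projFC i z) (FS.projFC i z') ≤ m := by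
  obtain ⟨w, w', hw, hw', P, hP⟩ := h
  have hmem : (FS.fcg i).dist (.inl w) (.inl w') ∈
      {n | ∃ a ∈ FS.projFC i z, ∃ b ∈ FS.projFC i z', (FS.fcg i).dist a b = n} :=
    ⟨_, ⟨w, rfl, hw⟩, _, ⟨w', rfl, hw'⟩, rfl⟩
  exact (Nat.sInf_le hmem).trans ((SimpleGraph.dist_le P).trans hP)

theorem cliqueDistLE_of_mem_blockingWalls (hz : v ∈ X.blockingWalls (FS.F i).carrier z)
    (hz' : v ∈ X.blockingWalls (FS.F i).carrier z') :
    FS.CliqueDistLE i ((FS.F i).gate z) ((FS.F i).gate z') (FS.ξ + 1) := by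
  set F := FS.F i
  have hξ := FS.one_le_ξ
  obtain ⟨k₀, hk₀⟩ := F.nonempty
  obtain ⟨c, hcF, hcH⟩ := exists_crosses_not_crosses_combHyp hz (X.side v k₀)
  obtain ⟨j, hj⟩ := FS.hyp_mem (ConvexSub.combHyp v (X.side v k₀))
    ⟨_, isCombHypSet_combHyp v _, fun _ => Iff.rfl⟩
  set H := FS.F j
  have hgate : ∀ {t}, v ∈ X.blockingWalls F.carrier t → X.d (F.gate (H.gate t)) (F.gate t) = 0 :=
    fun ht => F.d_gate_gate_combHyp_eq_zero hj
      (fun k hk => side_iff_of_not_crosses hz.1.not_crosses hk hk₀) (ht.1 k₀ hk₀)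
  have hp : F.gate (H.gate z) ∈ F.gate '' H.carrier := ⟨_, H.gate_mem z, rfl⟩
  have hp' : F.gate (H.gate z') ∈ F.gate '' H.carrier := ⟨_, H.gate_mem z', rfl⟩
  have hsmall : X.DiamLt (F.gate '' H.carrier) FS.ξ →
      FS.CliqueDistLE i (F.gate z) (F.gate z') (FS.ξ + 1) := fun hdiam =>
    (cliqueDistLE_of_mem (F.gate_mem z) (F.gate_mem z') ⟨c, hcF⟩).mono <| by
      have := hdiam _ hp _ hp'
      rw [d_eq_d_of_d_eq_zero (hgate hz) (hgate hz')] at this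
      omega
  rcases FS.proj_closed i j with ⟨k, hk⟩ | hdiam
  · rw [← hk] at hp hp' hsmall
    by_cases hkF : (FS.F k).carrier = F.carrier
    · rw [← hkF, hk] at hcF
      have hcH' := F.crosses_of_crosses_image_gate hcF
      rw [hj] at hcH'
      exact (hcH hcH').elim
    by_cases hdk : X.DiamLt (FS.F k).carrier FS.ξ
    · exact hsmall hdk
    have hcone : FS.ConePt i k :=
      ⟨hk ▸ Set.image_subset_iff.2 fun a _ => F.gate_mem a, hkF, Or.inr hdk⟩
    exact (cliqueDistLE_of_conePt hcone ((FS.F k).convex.mem_of_d_eq_zero hp (hgate hz))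
      ((FS.F k).convex.mem_of_d_eq_zero hp' (hgate hz'))
      (exists_crosses_of_not_diamLt hdk hξ)).mono (by omega)
  · exact hsmall hdiam

end FactorSystem

/-- Otherwise, by induction along the chain, every set would meet the first end set, the last one
included. -/
theorem Fin.exists_eq_empty_of_forall_subset_union {ι : Type*} {n : ℕ} (V : Fin (n + 1) → Set ι)
    (hcover : ∀ t, V t ⊆ V 0 ∪ V (Fin.last n))
    (hsplit : ∀ t, (V t ∩ V 0).Nonempty → (V t ∩ V (Fin.last n)).Nonempty → False)
    (hstep : ∀ t : Fin n, ∃ u, V t.castSucc \ {u} ⊆ V t.succ ∧ V t.succ \ {u} ⊆ V t.castSucc) :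
    ∃ t, V t = ∅ := by
  by_contra! hne
  have hleft : ∀ t, (V t ∩ V 0).Nonempty := by
    intro t
    induction t using Fin.induction with
    | zero => exact ⟨_, (hne 0).some_mem, (hne 0).some_mem⟩
    | succ t ih =>
      obtain ⟨v, hvt, hv0⟩ := ih
      obtain ⟨u, hu, hu'⟩ := hstep t
      by_contra hnot
      have hvu : v = u := by
        by_contra h
        exact hnot ⟨v, hu ⟨hvt, h⟩, hv0⟩
      obtain ⟨w, hw⟩ := hne t.succ
      rcases hcover _ hw with hw0 | hwn
      · exact hnot ⟨w, hw, hw0⟩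
      have hwu : w = u := by
        by_contra h
        exact hsplit _ ⟨v, hvt, hv0⟩ ⟨w, hu' ⟨hw, h⟩, hwn⟩
      exact hnot ⟨w, hw, hwu ▸ hvu ▸ hv0⟩
  exact hsplit _ (hleft _) ⟨_, (hne _).some_mem, (hne _).some_mem⟩

namespace CubeComplex.IsGeodesicSeq

variable {X : CubeComplex} {n : ℕ} {α : Fin (n + 1) → X.V}

theorem btw (hα : X.IsGeodesicSeq α) {s t u : Fin (n + 1)} (hst : s ≤ t) (htu : t ≤ u) :
    X.Btw (α s) (α t) (α u) := by
  rw [Fin.le_iff_val_le_val] at hst htu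
  unfold CubeComplex.Btw
  rw [hα s t, hα t u, hα s u]
  omega

theorem d_castSucc_succ (hα : X.IsGeodesicSeq α) (t : Fin n) :
    X.d (α t.castSucc) (α t.succ) = 1 := by
  rw [hα]
  simp only [Fin.val_castSucc, Fin.val_succ]
  omega

end CubeComplex.IsGeodesicSeq

open CubeComplex FactorSystem in
/-- Let `F` be a member of a factor system `𝔉` (with
constant `ξ`) on `X`, and let `x, y` be `0`--cubes whose projections to the
factored contact graph `ĈF` are at distance `> 2ξ + 4`.  Then every
combinatorial geodesic from `x` to `y` enters a parallel copy of `F`. -/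
theorem geodesic_enters_parallel_copy (X : CubeComplex) (FS : FactorSystem X)
    (i : FS.Fac) (x y : X.V)
    (hfar : 2 * FS.ξ + 4 < FS.dFC i (FS.projFC i x) (FS.projFC i y))
    {n : ℕ} (α : Fin (n + 1) → X.V) (hα : X.IsGeodesicSeq α)
    (hx : α 0 = x) (hy : α (Fin.last n) = y) :
    ∃ S : Set X.V, X.IsConvex S ∧ X.ParallelSet S (FS.F i).carrier ∧
      ∃ t : Fin (n + 1), α t ∈ S := by
  subst hx hy
  set V := fun t => X.blockingWalls (FS.F i).carrier (α t)
  have hsplit : ∀ t, (V t ∩ V 0).Nonempty → (V t ∩ V (Fin.last n)).Nonempty → False := by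
    rintro t ⟨v, hvt, hv0⟩ ⟨w, hwt, hwn⟩
    have := dFC_le_of_cliqueDistLE ((cliqueDistLE_of_mem_blockingWalls hv0 hvt).trans
      (cliqueDistLE_of_mem_blockingWalls hwt hwn))
    omega
  obtain ⟨t, ht⟩ := Fin.exists_eq_empty_of_forall_subset_union V
    (fun t => blockingWalls_subset_union (hα.btw (Fin.zero_le t) (Fin.le_last t))) hsplit
    (fun t => exists_blockingWalls_diff_subset (hα.d_castSucc_succ t))
  exact ⟨_, isConvex_parallelCopy, parallelSet_parallelCopy ht, t, self_mem_parallelCopy⟩
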